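/- arXiv:1105.4523 — 4 statements merged into one kernel-verified Lean document; each statement's English description precedes it below -/
import Mathlib

section
/- Let G be a second countable locally compact Hausdorff group with Haar measure μ, and let U be a compact invariant neighborhood of the identity (gUg⁻¹ = U for all g). Then the function φ_U(g) := μ(U ∩ gU) is a positive definite class function on G, i.e., φ_U(h⁻¹gh) = φ_U(g) for all g,h ∈ G. -/
open MeasureTheory
open scoped ComplexOrder Topology Pointwise

/-!
By left invariance `μ (U ∩ g • U) = μ (g₁ • U ∩ g₂ • U)` for `g = g₁⁻¹ * g₂`, and `μ (A ∩ B)`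
is the `L²` inner product of the indicators of `A` and `B`; so the matrix `(φ_U (gᵢ⁻¹ * gⱼ))ᵢⱼ`
is a Gram matrix and hence positive semidefinite. Conjugation preserves the Haar measure of a unimodular group and,
as `U` is conjugation invariant, maps `U ∩ g • U` onto `U ∩ (h⁻¹ * g * h) • U`.
-/

theorem sum_conj_mul_measureReal_inter_nonneg {α ι : Type*} [MeasurableSpace α] [Fintype ι]
    (μ : Measure α) {A : ι → Set α} (hA : ∀ i, MeasurableSet (A i)) (hAfin : ∀ i, μ (A i) ≠ ⊤)
    (c : ι → ℂ) :
    0 ≤ ∑ i, ∑ j, (starRingEnd ℂ) (c i) * c j * (μ.real (A i ∩ A j) : ℂ) := by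
  let v : ι → Lp ℂ 2 μ := fun i => indicatorConstLp 2 (hA i) (hAfin i) (1 : ℂ)
  have hgram := (Matrix.posSemidef_gram ℂ v).dotProduct_mulVec_nonneg c
  simp only [dotProduct, Matrix.mulVec, Matrix.gram_apply, v,
    L2.inner_indicatorConstLp_one_indicatorConstLp_one, Finset.mul_sum] at hgram
  convert hgram using 3 with i _ j _
  rw [Pi.star_apply, RCLike.star_def, mul_assoc, mul_comm (c j)]
  rfl

theorem measure_smul_inter_smul {G : Type*} [Group G] [MeasurableSpace G] [MeasurableMul G]
    (μ : Measure G) [μ.IsMulLeftInvariant] (U : Set G) (g₁ g₂ : G) :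
    μ (g₁ • U ∩ g₂ • U) = μ (U ∩ (g₁⁻¹ * g₂) • U) := by
  rw [← measure_smul μ g₁ (U ∩ _), Set.smul_set_inter, smul_smul, mul_inv_cancel_left]

theorem MeasureTheory.Measure.isMulRightInvariant_of_isInvInvariant {G : Type*} [Group G]
    [MeasurableSpace G] [MeasurableMul G] [MeasurableInv G] (μ : Measure G) [μ.IsMulLeftInvariant]
    [μ.IsInvInvariant] : μ.IsMulRightInvariant :=
  μ.inv_eq_self ▸ Measure.inv.instIsMulRightInvariant

theorem measure_preimage_conj {G : Type*} [Group G] [MeasurableSpace G] [MeasurableMul G]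
    (μ : Measure G) [μ.IsMulLeftInvariant] [μ.IsMulRightInvariant] (h : G) (s : Set G) :
    μ ((fun x => h * x * h⁻¹) ⁻¹' s) = μ s := by
  exact (measure_preimage_mul μ h _).trans (measure_preimage_mul_right μ h⁻¹ s)

theorem conj_mem_iff_of_image_conj_eq {G : Type*} [Group G] {U : Set G}
    (hU : ∀ g : G, (fun x => g * x * g⁻¹) '' U = U) (g x : G) :
    g * x * g⁻¹ ∈ U ↔ x ∈ U := by
  conv_lhs => rw [← hU g]
  exact (MulAut.conj g).injective.mem_set_image

theorem preimage_conj_inter_smul {G : Type*} [Group G] {U : Set G}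
    (hU : ∀ g x : G, g * x * g⁻¹ ∈ U ↔ x ∈ U) (g h : G) :
    (fun x => h * x * h⁻¹) ⁻¹' (U ∩ g • U) = U ∩ (h⁻¹ * g * h) • U := by
  ext x
  have hconj : g⁻¹ * (h * x * h⁻¹) = h * ((h⁻¹ * g * h)⁻¹ * x) * h⁻¹ := by group
  simp only [Set.preimage_inter, Set.mem_inter_iff, Set.mem_preimage,
    Set.mem_smul_set_iff_inv_smul_mem, smul_eq_mul, hconj, hU]

theorem stmt_9_general {G : Type*} [Group G] [TopologicalSpace G] [IsTopologicalGroup G]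
    [T2Space G]
    [MeasurableSpace G] [BorelSpace G]
    (μ : Measure G) [μ.IsHaarMeasure] [μ.IsInvInvariant]
    (U : Set G) (hUc : IsCompact U)
    (hUinv : ∀ g : G, (fun x => g * x * g⁻¹) '' U = U) :
    (∀ (n : ℕ) (g : Fin n → G) (c : Fin n → ℂ),
      0 ≤ ∑ i, ∑ j, (starRingEnd ℂ) (c i) * c j *
          ((μ (U ∩ ((g i)⁻¹ * g j) • U)).toReal : ℂ)) ∧
    ∀ g h : G, μ (U ∩ (h⁻¹ * g * h) • U) = μ (U ∩ g • U) := by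
  constructor
  · intro n g c
    have hgU : ∀ i, IsCompact (g i • U) := fun i => hUc.smul (g i)
    have := sum_conj_mul_measureReal_inter_nonneg μ (fun i => (hgU i).isClosed.measurableSet)
      (fun i => (hgU i).measure_ne_top) c
    simpa only [Measure.real, measure_smul_inter_smul] using this
  · intro g h
    have := μ.isMulRightInvariant_of_isInvInvariant
    rw [← preimage_conj_inter_smul (conj_mem_iff_of_image_conj_eq hUinv), measure_preimage_conj]

/-- For a second countable locally compact Hausdorff unimodular group `G` with Haar
measure `μ` and a compact invariant identity neighborhood `U`, the function
`φ_U(g) = μ(U ∩ gU)` is a positive definite class function on `G`. -/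
theorem stmt_9 {G : Type*} [Group G] [TopologicalSpace G] [IsTopologicalGroup G]
    [LocallyCompactSpace G] [SecondCountableTopology G] [T2Space G]
    [MeasurableSpace G] [BorelSpace G]
    (μ : Measure G) [μ.IsHaarMeasure] [μ.IsInvInvariant]
    (U : Set G) (hUc : IsCompact U) (hU1 : U ∈ 𝓝 (1 : G))
    (hUinv : ∀ g : G, (fun x => g * x * g⁻¹) '' U = U) :
    (∀ (n : ℕ) (g : Fin n → G) (c : Fin n → ℂ),
      0 ≤ ∑ i, ∑ j, (starRingEnd ℂ) (c i) * c j *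
          ((μ (U ∩ ((g i)⁻¹ * g j) • U)).toReal : ℂ)) ∧
    ∀ g h : G, μ (U ∩ (h⁻¹ * g * h) • U) = μ (U ∩ g • U) :=
  stmt_9_general μ U hUc hUinv
end

section
/- Let G be a group, f : G → ℂ a positive definite function with f(e) = 1, taking values of modulus at most 1. Then for all x, y ∈ G, |f(x) - f(y)|² ≤ 2|1 - Re f(x⁻¹y)| (Krein's inequality). -/
/-!
Evaluate positive definiteness at the points `1, x, y` with coefficients `t, ā, -ā`, where
`a = f x - f y` and `t` is real. Since `f (g⁻¹) = conj (f g)`, the form is the real quadratic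
`t² + 2t|a|² + 2|a|²(1 - Re f (x⁻¹y))`, and its nonnegativity at `t = -|a|²` is the inequality.
-/

open scoped ComplexOrder

/-- `f : G → ℂ` is positive definite. -/
def IsPosDefFn {G : Type*} [Group G] (f : G → ℂ) : Prop :=
  ∀ (n : ℕ) (g : Fin n → G) (c : Fin n → ℂ),
    0 ≤ ∑ i, ∑ j, (starRingEnd ℂ) (c i) * c j * f ((g i)⁻¹ * g j)

namespace IsPosDefFn

variable {G : Type*} [Group G] {f : G → ℂ}

theorem apply_inv (hpd : IsPosDefFn f) (g : G) : f g⁻¹ = starRingEnd ℂ (f g) := by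
  have h₀ := hpd 1 ![1] ![1]
  have h₁ := hpd 2 ![1, g] ![1, 1]
  have h₂ := hpd 2 ![1, g] ![1, Complex.I]
  simp only [Fin.sum_univ_one, Fin.sum_univ_two, Complex.le_def, Matrix.cons_val_fin_one,
    Matrix.cons_val_zero, Matrix.cons_val_one, map_one, mul_one, one_mul, inv_one, inv_mul_cancel,
    Complex.conj_I, Complex.I_mul_I, neg_mul, neg_neg, Complex.add_re, Complex.add_im,
    Complex.mul_re, Complex.mul_im, Complex.neg_re, Complex.neg_im, Complex.zero_re, Complex.zero_im,
    Complex.I_re, Complex.I_im, zero_mul, zero_sub, zero_add] at h₀ h₁ h₂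
  apply Complex.ext <;> simp only [Complex.conj_re, Complex.conj_im] <;> linarith

theorem quadratic_nonneg (hpd : IsPosDefFn f) (h₁ : f 1 = 1) (x y : G) (t : ℝ) :
    0 ≤ t ^ 2 + 2 * t * ‖f x - f y‖ ^ 2
      + 2 * ‖f x - f y‖ ^ 2 * (1 - (f (x⁻¹ * y)).re) := by
  set a := f x - f y
  have hyx : f (y⁻¹ * x) = starRingEnd ℂ (f (x⁻¹ * y)) := by
    simpa only [mul_inv_rev, inv_inv] using hpd.apply_inv (x⁻¹ * y)
  have h := hpd 3 ![1, x, y] ![(t : ℂ), starRingEnd ℂ a, -starRingEnd ℂ a]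
  rw [Complex.sq_norm, Complex.normSq_apply]
  refine Complex.zero_le_real.mp (h.trans_eq ?_)
  apply Complex.ext <;> simp [Fin.sum_univ_three, h₁, hpd.apply_inv, hyx, a, sq] <;> ring

end IsPosDefFn

theorem stmt_10_general {G : Type*} [Group G] (f : G → ℂ) (hpd : IsPosDefFn f)
    (h1 : f 1 = 1) :
    ∀ x y : G, ‖f x - f y‖ ^ 2 ≤ 2 * |1 - (f (x⁻¹ * y)).re| := by
  intro x y
  have hq := hpd.quadratic_nonneg h1 x y (-‖f x - f y‖ ^ 2)
  rcases (sq_nonneg ‖f x - f y‖).eq_or_lt with h | h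
  · rw [← h]; positivity
  · nlinarith [le_abs_self (1 - (f (x⁻¹ * y)).re)]

/-- Krein's inequality: for a positive definite function `f` with `f(e) = 1` and
`|f| ≤ 1`, one has `|f(x) - f(y)|² ≤ 2 |1 - Re f(x⁻¹ y)|`. -/
theorem stmt_10 {G : Type*} [Group G] (f : G → ℂ) (hpd : IsPosDefFn f)
    (h1 : f 1 = 1) (hb : ∀ g : G, ‖f g‖ ≤ 1) :
    ∀ x y : G, ‖f x - f y‖ ^ 2 ≤ 2 * |1 - (f (x⁻¹ * y)).re| :=
  stmt_10_general f hpd h1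
end

section
/- Let M be a type II_∞ factor with normal faithful semifinite trace τ, and H an infinite-dimensional Hilbert space with operator trace Tr. Then U(M)₂ (with the ‖·‖_{2,τ}-metric topology) is not isomorphic as a topological group to U(H)₂ = {u ∈ U(H) : 1 - u Hilbert–Schmidt} (with the ‖·‖_{2,Tr}-metric topology). -/
/-!
Symmetries (self-adjoint unitaries) `u ≠ 1` of finite `2`-norm distance from `1` are exactly
`1 - 2p` for nonzero finite projections `p`, at distance `2 ‖p‖₂` from `1`, and a topological
group isomorphism preserves nontrivial symmetries. In `U(K)₂` they stay at distance `≥ 2` from `1`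
since `Tr p ≥ 1`, while in `U(M)₂` a single nonzero finite projection (obtained by pulling back
one from `U(K)₂`) has subprojections of arbitrarily small trace, giving nontrivial symmetries
converging to `1`; continuity at `1` is then impossible.
-/

open scoped ENNReal

section Monoid

variable {A B : Type*} [Monoid A] [Monoid B]

theorem map_one_eq_one_of_mem_unitary [StarMul B] {G : Set A} {φ : A → B} (hG : 1 ∈ G)
    (hmul : ∀ u ∈ G, ∀ u' ∈ G, φ (u * u') = φ u * φ u') (hunit : φ 1 ∈ unitary B) :
    φ 1 = 1 := by
  have h := hmul 1 hG 1 hG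
  rw [one_mul, eq_comm] at h
  exact (Unitary.isUnit_coe (U := ⟨_, hunit⟩)).mul_eq_left.mp h

theorem map_involution {G : Set A} {φ : A → B} (hG : 1 ∈ G) (hφ1 : φ 1 = 1)
    (hmul : ∀ u ∈ G, ∀ u' ∈ G, φ (u * u') = φ u * φ u') (hinj : Set.InjOn φ G)
    {u : A} (hu : u ∈ G) (huu : u * u = 1) (hu1 : u ≠ 1) : φ u * φ u = 1 ∧ φ u ≠ 1 :=
  ⟨by rw [← hmul u hu u hu, huu, hφ1], fun h => hu1 (hinj hu hG (h.trans hφ1.symm))⟩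

theorem star_eq_self_of_mul_self_eq_one [StarMul A] {u : A} (hu : u ∈ unitary A)
    (huu : u * u = 1) : star u = u := by
  rw [← mul_one (star u), ← huu, ← mul_assoc, Unitary.star_mul_self_of_mem hu, one_mul]

end Monoid

theorem false_of_continuousAt_one_of_involutions {A B : Type*} [Ring A] [Ring B]
    {G : Set A} {G' : Set B} {dA : A → ℝ≥0∞} {dB : B → ℝ≥0∞} {φ : A → B} {c : ℝ≥0∞}
    (hc : 0 < c) (hG : 1 ∈ G) (hφ1 : φ 1 = 1) (hmaps : Set.MapsTo φ G G')
    (hmul : ∀ u ∈ G, ∀ u' ∈ G, φ (u * u') = φ u * φ u') (hinj : Set.InjOn φ G)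
    (hcont : ∀ ε, 0 < ε → ∃ δ, 0 < δ ∧ ∀ u ∈ G, dA (u - 1) < δ → dB (φ u - φ 1) < ε)
    (hsmall : ∀ δ, 0 < δ → ∃ u ∈ G, u * u = 1 ∧ u ≠ 1 ∧ dA (u - 1) < δ)
    (hgap : ∀ v ∈ G', v * v = 1 → v ≠ 1 → c ≤ dB (v - 1)) : False := by
  obtain ⟨δ, hδ, hφδ⟩ := hcont c hc
  obtain ⟨u, hu, huu, hu1, huδ⟩ := hsmall δ hδ
  obtain ⟨hvv, hv1⟩ := map_involution hG hφ1 hmul hinj hu huu hu1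
  have hnear := hφδ u hu huδ
  rw [hφ1] at hnear
  exact (hgap _ (hmaps hu) hvv hv1).not_gt hnear

section Homogeneous

variable {E : Type*} [AddCommGroup E] [Module ℂ E] {N : E → ℝ≥0∞}
  (hsmul : ∀ (c : ℂ) x, N (c • x) = ‖c‖₊ * N x)
include hsmul

theorem apply_two_smul (x : E) : N ((2 : ℂ) • x) = 2 * N x := by
  rw [hsmul]
  norm_num

theorem apply_sub_comm (x y : E) : N (x - y) = N (y - x) := by
  rw [← neg_sub, ← neg_one_smul ℂ, hsmul]
  simp

end Homogeneous

section StarAlgebra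

variable {A : Type*} [Ring A] [StarRing A] [Algebra ℂ A]

theorem IsStarProjection.one_sub_two_smul_mul_self {p : A} (hp : IsStarProjection p) :
    (1 - (2 : ℂ) • p) * (1 - (2 : ℂ) • p) = 1 := by
  have hpp : p * p = p := hp.isIdempotentElem
  simp only [sub_mul, mul_sub, one_mul, mul_one, smul_mul_smul_comm, hpp]
  module

variable [StarModule ℂ A]

theorem IsStarProjection.one_sub_two_smul_mem_unitary {p : A} (hp : IsStarProjection p) :
    1 - (2 : ℂ) • p ∈ unitary A := by
  have hsa : star (1 - (2 : ℂ) • p) = 1 - (2 : ℂ) • p := by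
    rw [star_sub, star_one, star_smul, hp.isSelfAdjoint.star_eq]
    norm_num
  rw [Unitary.mem_iff, hsa, hp.one_sub_two_smul_mul_self, and_self]

theorem isStarProjection_half_smul_one_sub {u : A} (hu : u ∈ unitary A) (huu : u * u = 1) :
    IsStarProjection ((2⁻¹ : ℂ) • (1 - u)) where
  isIdempotentElem := by
    have h : (1 - u) * (1 - u) = (2 : ℂ) • (1 - u) := by
      simp only [sub_mul, mul_sub, huu, one_mul, mul_one]
      module
    rw [IsIdempotentElem, smul_mul_smul_comm, h, smul_smul]
    norm_num
  isSelfAdjoint := by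
    rw [IsSelfAdjoint, star_smul, star_sub, star_one, star_eq_self_of_mul_self_eq_one hu huu]
    norm_num

section TwoNorm

variable {N : A → ℝ≥0∞} (hsmul : ∀ (c : ℂ) x, N (c • x) = ‖c‖₊ * N x)
include hsmul

theorem two_le_apply_sub_one_of_mul_self_eq_one
    (hproj : ∀ p : A, IsStarProjection p → p ≠ 0 → 1 ≤ N p)
    {u : A} (hu : u ∈ unitary A) (huu : u * u = 1) (hu1 : u ≠ 1) : 2 ≤ N (u - 1) := by
  have hq0 : (2⁻¹ : ℂ) • (1 - u) ≠ 0 := by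
    simpa [sub_eq_zero] using hu1.symm
  calc 2 = 2 * 1 := (mul_one 2).symm
    _ ≤ 2 * N ((2⁻¹ : ℂ) • (1 - u)) := by
      gcongr
      exact hproj _ (isStarProjection_half_smul_one_sub hu huu) hq0
    _ = N (u - 1) := by
      rw [← apply_two_smul hsmul, smul_inv_smul₀ two_ne_zero, apply_sub_comm hsmul]

theorem exists_involution_near_one (S : StarSubalgebra ℂ A)
    (hsmall : ∀ q ∈ S, IsStarProjection q → q ≠ 0 → N q < ∞ →
      ∀ ε, 0 < ε → ∃ p ∈ S, IsStarProjection p ∧ p ≠ 0 ∧ N p < ε)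
    {u : A} (huS : u ∈ S) (huU : u ∈ unitary A) (hufin : N (1 - u) < ∞)
    (huu : u * u = 1) (hu1 : u ≠ 1) {δ : ℝ≥0∞} (hδ : 0 < δ) :
    ∃ u' ∈ {u | u ∈ S ∧ u ∈ unitary A ∧ N (1 - u) < ∞},
      u' * u' = 1 ∧ u' ≠ 1 ∧ N (u' - 1) < δ := by
  have hq0 : (2⁻¹ : ℂ) • (1 - u) ≠ 0 := by
    simpa [sub_eq_zero] using hu1.symm
  have hqfin : N ((2⁻¹ : ℂ) • (1 - u)) < ∞ := by
    rw [hsmul]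
    exact ENNReal.mul_lt_top ENNReal.coe_lt_top hufin
  obtain ⟨p, hpS, hp, hp0, hpδ⟩ :=
    hsmall _ (S.smul_mem (sub_mem (one_mem S) huS) _)
      (isStarProjection_half_smul_one_sub huU huu) hq0 hqfin (δ / 2) (ENNReal.half_pos hδ.ne')
  have hdist : N (1 - (1 - (2 : ℂ) • p)) = 2 * N p := by
    rw [sub_sub_cancel, apply_two_smul hsmul]
  refine ⟨1 - (2 : ℂ) • p, ⟨sub_mem (one_mem S) (S.smul_mem hpS _),
    hp.one_sub_two_smul_mem_unitary, ?_⟩, hp.one_sub_two_smul_mul_self, ?_, ?_⟩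
  · rw [hdist]
    exact ENNReal.mul_lt_top (by norm_num) (hpδ.trans_le le_top)
  · simpa [sub_eq_self] using hp0
  · rw [apply_sub_comm hsmul, hdist]
    calc 2 * N p < 2 * (δ / 2) := by gcongr; norm_num
      _ = δ := ENNReal.mul_div_cancel (by norm_num) (by norm_num)

end TwoNorm

end StarAlgebra

theorem stmt_15_general {H K : Type*}
    [NormedAddCommGroup H] [InnerProductSpace ℂ H] [CompleteSpace H]
    [NormedAddCommGroup K] [InnerProductSpace ℂ K] [CompleteSpace K]
    (M : VonNeumannAlgebra H)
    (n2 : (H →L[ℂ] H) → ℝ≥0∞) (m2 : (K →L[ℂ] K) → ℝ≥0∞)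
    -- standard properties of the extended 2-norms
    (hzero : n2 0 = 0)
    (hsmul : ∀ (c : ℂ) x, n2 (c • x) = (‖c‖₊ : ℝ≥0∞) * n2 x)
    (hzero' : m2 0 = 0)
    (hsmul' : ∀ (c : ℂ) x, m2 (c • x) = (‖c‖₊ : ℝ≥0∞) * m2 x)
    -- `M` is a II_∞ factor: arbitrarily small nonzero subprojections of finite projections
    (hII : ∀ q : H →L[ℂ] H, q ∈ M → IsSelfAdjoint q → q * q = q → q ≠ 0 → n2 q < ∞ →
      ∀ ε : ℝ≥0∞, 0 < ε → ∃ p : H →L[ℂ] H, p ∈ M ∧ IsSelfAdjoint p ∧ p * p = p ∧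
        p ≠ 0 ∧ p * q = p ∧ q * p = p ∧ n2 p < ε)
    -- on `B(K)`, every nonzero projection has `Tr ≥ 1`
    (hProj : ∀ p : K →L[ℂ] K, IsSelfAdjoint p → p * p = p → p ≠ 0 → 1 ≤ m2 p)
    (hfin : ∃ p : K →L[ℂ] K, IsSelfAdjoint p ∧ p * p = p ∧ p ≠ 0 ∧ m2 p < ∞) :
    ¬ ∃ (φ : (H →L[ℂ] H) → (K →L[ℂ] K)) (ψ : (K →L[ℂ] K) → (H →L[ℂ] H)),
      -- notation for the two groups
      (∀ u, u ∈ {u | u ∈ M ∧ u ∈ unitary (H →L[ℂ] H) ∧ n2 (1 - u) < ∞} →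
        φ u ∈ {v : K →L[ℂ] K | v ∈ unitary (K →L[ℂ] K) ∧ m2 (1 - v) < ∞}) ∧
      (∀ v, v ∈ {v : K →L[ℂ] K | v ∈ unitary (K →L[ℂ] K) ∧ m2 (1 - v) < ∞} →
        ψ v ∈ {u | u ∈ M ∧ u ∈ unitary (H →L[ℂ] H) ∧ n2 (1 - u) < ∞}) ∧
      -- mutually inverse
      (∀ u ∈ {u | u ∈ M ∧ u ∈ unitary (H →L[ℂ] H) ∧ n2 (1 - u) < ∞}, ψ (φ u) = u) ∧
      (∀ v ∈ {v : K →L[ℂ] K | v ∈ unitary (K →L[ℂ] K) ∧ m2 (1 - v) < ∞}, φ (ψ v) = v) ∧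
      -- group homomorphisms
      (∀ u ∈ {u | u ∈ M ∧ u ∈ unitary (H →L[ℂ] H) ∧ n2 (1 - u) < ∞},
       ∀ u' ∈ {u | u ∈ M ∧ u ∈ unitary (H →L[ℂ] H) ∧ n2 (1 - u) < ∞},
        φ (u * u') = φ u * φ u') ∧
      (∀ v ∈ {v : K →L[ℂ] K | v ∈ unitary (K →L[ℂ] K) ∧ m2 (1 - v) < ∞},
       ∀ v' ∈ {v : K →L[ℂ] K | v ∈ unitary (K →L[ℂ] K) ∧ m2 (1 - v) < ∞},
        ψ (v * v') = ψ v * ψ v') ∧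
      -- homeomorphism for the trace 2-norm metrics
      (∀ u ∈ {u | u ∈ M ∧ u ∈ unitary (H →L[ℂ] H) ∧ n2 (1 - u) < ∞},
        ∀ ε : ℝ≥0∞, 0 < ε → ∃ δ : ℝ≥0∞, 0 < δ ∧
          ∀ u' ∈ {u | u ∈ M ∧ u ∈ unitary (H →L[ℂ] H) ∧ n2 (1 - u) < ∞},
            n2 (u' - u) < δ → m2 (φ u' - φ u) < ε) ∧
      (∀ v ∈ {v : K →L[ℂ] K | v ∈ unitary (K →L[ℂ] K) ∧ m2 (1 - v) < ∞},
        ∀ ε : ℝ≥0∞, 0 < ε → ∃ δ : ℝ≥0∞, 0 < δ ∧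
          ∀ v' ∈ {v : K →L[ℂ] K | v ∈ unitary (K →L[ℂ] K) ∧ m2 (1 - v) < ∞},
            m2 (v' - v) < δ → n2 (ψ v' - ψ v) < ε) := by
  rintro ⟨φ, ψ, hφmem, hψmem, hψφ, hφψ, hφmul, hψmul, hφcont, -⟩
  have h1H : (1 : H →L[ℂ] H) ∈ {u | u ∈ M ∧ u ∈ unitary (H →L[ℂ] H) ∧ n2 (1 - u) < ∞} :=
    ⟨one_mem M, one_mem _, by simp [hzero]⟩
  have h1K : (1 : K →L[ℂ] K) ∈ {v : K →L[ℂ] K | v ∈ unitary (K →L[ℂ] K) ∧ m2 (1 - v) < ∞} :=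
    ⟨one_mem _, by simp [hzero']⟩
  have hφ1 := map_one_eq_one_of_mem_unitary h1H hφmul (hφmem 1 h1H).1
  have hψ1 := map_one_eq_one_of_mem_unitary h1K hψmul (hψmem 1 h1K).2.1
  obtain ⟨p, hpsa, hpp, hp0, hpfin⟩ := hfin
  have hp : IsStarProjection p := ⟨hpp, hpsa⟩
  have hv : 1 - (2 : ℂ) • p ∈ {v : K →L[ℂ] K | v ∈ unitary (K →L[ℂ] K) ∧ m2 (1 - v) < ∞} :=
    ⟨hp.one_sub_two_smul_mem_unitary, by
      rw [sub_sub_cancel, apply_two_smul hsmul']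
      exact ENNReal.mul_lt_top (by norm_num) hpfin⟩
  obtain ⟨huu, hu1⟩ := map_involution h1K hψ1 hψmul (Set.LeftInvOn.injOn hφψ) hv
    hp.one_sub_two_smul_mul_self (by simpa [sub_eq_self] using hp0)
  obtain ⟨huM, huU, hufin⟩ := hψmem _ hv
  have hsmallM : ∀ q ∈ M.toStarSubalgebra, IsStarProjection q → q ≠ 0 → n2 q < ∞ →
      ∀ ε, 0 < ε → ∃ p ∈ M.toStarSubalgebra, IsStarProjection p ∧ p ≠ 0 ∧ n2 p < ε := by
    intro q hqM hq hq0 hqfin ε hε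
    obtain ⟨p, hpM, hpsa, hpp, hp0, -, -, hpε⟩ :=
      hII q hqM hq.isSelfAdjoint hq.isIdempotentElem hq0 hqfin ε hε
    exact ⟨p, hpM, ⟨hpp, hpsa⟩, hp0, hpε⟩
  exact false_of_continuousAt_one_of_involutions two_pos h1H hφ1 hφmem hφmul
    (Set.LeftInvOn.injOn hψφ) (hφcont 1 h1H)
    (fun δ hδ => exists_involution_near_one hsmul M.toStarSubalgebra hsmallM
      huM huU hufin huu hu1 hδ)
    (fun v hv hvv hv1 => two_le_apply_sub_one_of_mul_self_eq_one hsmul'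
      (fun p hp hp0 => hProj p hp.isSelfAdjoint hp.isIdempotentElem hp0) hv.1 hvv hv1)

theorem stmt_15 {H K : Type*}
    [NormedAddCommGroup H] [InnerProductSpace ℂ H] [CompleteSpace H]
    [NormedAddCommGroup K] [InnerProductSpace ℂ K] [CompleteSpace K]
    (M : VonNeumannAlgebra H)
    (n2 : (H →L[ℂ] H) → ℝ≥0∞) (m2 : (K →L[ℂ] K) → ℝ≥0∞)
    -- standard properties of the extended 2-norms
    (hzero : n2 0 = 0) (hadd : ∀ x y, n2 (x + y) ≤ n2 x + n2 y)
    (hsmul : ∀ (c : ℂ) x, n2 (c • x) = (‖c‖₊ : ℝ≥0∞) * n2 x)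
    (hzero' : m2 0 = 0) (hadd' : ∀ x y, m2 (x + y) ≤ m2 x + m2 y)
    (hsmul' : ∀ (c : ℂ) x, m2 (c • x) = (‖c‖₊ : ℝ≥0∞) * m2 x)
    -- `M` is a II_∞ factor: arbitrarily small nonzero subprojections of finite projections
    (hII : ∀ q : H →L[ℂ] H, q ∈ M → IsSelfAdjoint q → q * q = q → q ≠ 0 → n2 q < ∞ →
      ∀ ε : ℝ≥0∞, 0 < ε → ∃ p : H →L[ℂ] H, p ∈ M ∧ IsSelfAdjoint p ∧ p * p = p ∧
        p ≠ 0 ∧ p * q = p ∧ q * p = p ∧ n2 p < ε)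
    -- on `B(K)`, every nonzero projection has `Tr ≥ 1`
    (hProj : ∀ p : K →L[ℂ] K, IsSelfAdjoint p → p * p = p → p ≠ 0 → 1 ≤ m2 p)
    (hfin : ∃ p : K →L[ℂ] K, IsSelfAdjoint p ∧ p * p = p ∧ p ≠ 0 ∧ m2 p < ∞) :
    ¬ ∃ (φ : (H →L[ℂ] H) → (K →L[ℂ] K)) (ψ : (K →L[ℂ] K) → (H →L[ℂ] H)),
      -- notation for the two groups
      (∀ u, u ∈ {u | u ∈ M ∧ u ∈ unitary (H →L[ℂ] H) ∧ n2 (1 - u) < ∞} →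
        φ u ∈ {v : K →L[ℂ] K | v ∈ unitary (K →L[ℂ] K) ∧ m2 (1 - v) < ∞}) ∧
      (∀ v, v ∈ {v : K →L[ℂ] K | v ∈ unitary (K →L[ℂ] K) ∧ m2 (1 - v) < ∞} →
        ψ v ∈ {u | u ∈ M ∧ u ∈ unitary (H →L[ℂ] H) ∧ n2 (1 - u) < ∞}) ∧
      -- mutually inverse
      (∀ u ∈ {u | u ∈ M ∧ u ∈ unitary (H →L[ℂ] H) ∧ n2 (1 - u) < ∞}, ψ (φ u) = u) ∧
      (∀ v ∈ {v : K →L[ℂ] K | v ∈ unitary (K →L[ℂ] K) ∧ m2 (1 - v) < ∞}, φ (ψ v) = v) ∧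
      -- group homomorphisms
      (∀ u ∈ {u | u ∈ M ∧ u ∈ unitary (H →L[ℂ] H) ∧ n2 (1 - u) < ∞},
       ∀ u' ∈ {u | u ∈ M ∧ u ∈ unitary (H →L[ℂ] H) ∧ n2 (1 - u) < ∞},
        φ (u * u') = φ u * φ u') ∧
      (∀ v ∈ {v : K →L[ℂ] K | v ∈ unitary (K →L[ℂ] K) ∧ m2 (1 - v) < ∞},
       ∀ v' ∈ {v : K →L[ℂ] K | v ∈ unitary (K →L[ℂ] K) ∧ m2 (1 - v) < ∞},
        ψ (v * v') = ψ v * ψ v') ∧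
      -- homeomorphism for the trace 2-norm metrics
      (∀ u ∈ {u | u ∈ M ∧ u ∈ unitary (H →L[ℂ] H) ∧ n2 (1 - u) < ∞},
        ∀ ε : ℝ≥0∞, 0 < ε → ∃ δ : ℝ≥0∞, 0 < δ ∧
          ∀ u' ∈ {u | u ∈ M ∧ u ∈ unitary (H →L[ℂ] H) ∧ n2 (1 - u) < ∞},
            n2 (u' - u) < δ → m2 (φ u' - φ u) < ε) ∧
      (∀ v ∈ {v : K →L[ℂ] K | v ∈ unitary (K →L[ℂ] K) ∧ m2 (1 - v) < ∞},
        ∀ ε : ℝ≥0∞, 0 < ε → ∃ δ : ℝ≥0∞, 0 < δ ∧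
          ∀ v' ∈ {v : K →L[ℂ] K | v ∈ unitary (K →L[ℂ] K) ∧ m2 (1 - v) < ∞},
            m2 (v' - v) < δ → n2 (ψ v' - ψ v) < ε) :=
  stmt_15_general M n2 m2 hzero hsmul hzero' hsmul' hII hProj hfin
end

section
/- Let {Gₙ} be a sequence of topological groups each of which embeds as a closed topological subgroup of the unitary group (with strong operator topology) of a finite von Neumann algebra, and suppose each Gₙ is Polish. Then the projective limit G = lim← Gₙ of a projective system with continuous connecting homomorphisms jₘₙ : Gₘ → Gₙ (n ≤ m) also embeds as a closed subgroup of the unitary group of a finite von Neumann algebra. -/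
/-!
Realise each `Gₙ` inside the unitary group of a finite von Neumann algebra `Nₙ ⊆ B(Eₙ)` and let
the product `∏ Gₙ` act block-diagonally on the Hilbert sum `ℓ²(Eₙ)`. The block-diagonal operators
with blocks in `Nₙ` form a von Neumann algebra, finite because an isometry is unitary as soon as
all its blocks are. Reading off the blocks is continuous and injective on its unitary group, and
turns the diagonal representation into the product of the closed embeddings `Gₙ → U(Nₙ)`, so the
product embeds as a closed subgroup. The projective limit is a closed subgroup of the product,
since the `Gₙ` are Hausdorff and the `jₘₙ` continuous.
-/

/-- A witness that the topological group `G` embeds as a closed topological subgroup of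
the unitary group (with the strong operator topology) of a finite von Neumann algebra
`M` acting on a Hilbert space `H`.  The strong operator topology on bounded operators
is the topology induced from the product topology on `H → H` via `u ↦ ⇑u`. -/
structure FiniteTypeWitness (G : Type*) [TopologicalSpace G] [Group G] where
  H : Type
  [nacg : NormedAddCommGroup H]
  [ips : InnerProductSpace ℂ H]
  [cs : CompleteSpace H]
  M : VonNeumannAlgebra H
  /-- `M` is a finite von Neumann algebra: every isometry in `M` is a unitary. -/
  finite : ∀ x : H →L[ℂ] H, x ∈ M → star x * x = 1 → x * star x = 1
  /-- the embedding, a continuous injective homomorphism into the unitaries of `M` -/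
  π : G →* (H →L[ℂ] H)
  mem : ∀ g : G, π g ∈ M
  unitary : ∀ g : G, π g ∈ unitary (H →L[ℂ] H)
  /-- `π` is a homeomorphism onto its image for the strong operator topology -/
  hembedding : Topology.IsEmbedding fun g : G => (⇑(π g) : H → H)
  /-- the image of `π` is closed in the unitary group of `M` (strong operator topology) -/
  closed : IsClosed {p : {fn : H → H // ∃ u : H →L[ℂ] H, u ∈ M ∧
      u ∈ _root_.unitary (H →L[ℂ] H) ∧ ⇑u = fn} | ∃ g : G, (⇑(π g) : H → H) = ↑p}

/-- A topological group is of finite type if it embeds as a closed subgroup of the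
unitary group of a finite von Neumann algebra. -/
def IsFiniteTypeGroup (G : Type*) [TopologicalSpace G] [Group G] : Prop :=
  Nonempty (FiniteTypeWitness G)

open Topology Function
open scoped ENNReal

lemma Topology.IsClosedEmbedding.of_comp_of_injective {X Y Z : Type*} [TopologicalSpace X]
    [TopologicalSpace Y] [TopologicalSpace Z] {f : X → Y} {g : Y → Z} (hf : Continuous f)
    (hg : Continuous g) (hg_inj : Injective g) (hgf : IsClosedEmbedding (g ∘ f)) :
    IsClosedEmbedding f where
  toIsEmbedding := ⟨.of_comp hf hg hgf.isInducing, hgf.injective.of_comp⟩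
  isClosed_range := by
    rw [← Set.preimage_image_eq (Set.range f) hg_inj, ← Set.range_comp]
    exact hgf.isClosed_range.preimage hg

namespace lp

section congrRight

variable {α 𝕜 : Type*} {E F : α → Type*} {p : ℝ≥0∞} [NormedField 𝕜]
  [∀ i, NormedAddCommGroup (E i)] [∀ i, NormedSpace 𝕜 (E i)]
  [∀ i, NormedAddCommGroup (F i)] [∀ i, NormedSpace 𝕜 (F i)] [Fact (1 ≤ p)]

def congrRight (e : ∀ i, E i ≃ₗᵢ[𝕜] F i) : lp E p ≃ₗᵢ[𝕜] lp F p where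
  toFun f := ⟨fun i => e i (f i), (lp.memℓp f).mono' fun i => ((e i).norm_map (f i)).le⟩
  invFun f := ⟨fun i => (e i).symm (f i),
    (lp.memℓp f).mono' fun i => ((e i).symm.norm_map (f i)).le⟩
  map_add' f g := lp.ext <| funext fun i => map_add (e i) (f i) (g i)
  map_smul' c f := lp.ext <| funext fun i => map_smul (e i) c (f i)
  left_inv f := lp.ext <| funext fun i => (e i).symm_apply_apply (f i)
  right_inv f := lp.ext <| funext fun i => (e i).apply_symm_apply (f i)
  norm_map' f := by
    rw [← norm_toNorm, ← norm_toNorm (x := f)]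
    congr 1
    exact lp.ext <| funext fun i => (e i).norm_map (f i)

@[simp]
lemma congrRight_apply (e : ∀ i, E i ≃ₗᵢ[𝕜] F i) (f : lp E p) (i : α) :
    congrRight e f i = e i (f i) := rfl

lemma congrRight_single [DecidableEq α] (e : ∀ i, E i ≃ₗᵢ[𝕜] F i) (i : α) (w : E i) :
    congrRight (p := p) e (lp.single p i w) = lp.single p i (e i w) := by
  ext j
  rcases eq_or_ne j i with rfl | h
  · rw [congrRight_apply, lp.single_apply_self, lp.single_apply_self]
  · rw [congrRight_apply, lp.single_apply_ne _ _ _ h, lp.single_apply_ne _ _ _ h, map_zero]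

def congrRightHom : (∀ i, E i ≃ₗᵢ[𝕜] E i) →* (lp E p ≃ₗᵢ[𝕜] lp E p) where
  toFun := congrRight
  map_one' := rfl
  map_mul' _ _ := rfl

lemma continuous_congrRight_apply {X : Type*} [TopologicalSpace X] (hp : p ≠ ∞)
    {e : X → ∀ i, E i ≃ₗᵢ[𝕜] F i} (he : ∀ i w, Continuous fun x => e x i w) (f : lp E p) :
    Continuous fun x => congrRight (e x) f := by
  classical
  -- the truncations of `f` converge to `f`, uniformly in `x` since every `congrRight (e x)` is
  -- an isometry
  refine TendstoUniformly.continuous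
    (p := Filter.atTop) (F := fun s x => congrRight (e x) (∑ i ∈ s, lp.single p i (f i))) ?_
    (Filter.Frequently.of_forall fun s => ?_)
  · rw [Metric.tendstoUniformly_iff]
    intro ε hε
    filter_upwards [Metric.tendsto_nhds.mp (lp.hasSum_single hp f) ε hε] with s hs x
    rw [LinearIsometryEquiv.dist_map, dist_comm]
    exact hs
  · simp only [map_sum, congrRight_single]
    exact continuous_finsetSum _ fun i _ => (isometry_single i).continuous.comp (he i (f i))

end congrRight

section Hilbert

variable {α 𝕜 : Type*} {E : α → Type*} [RCLike 𝕜] [∀ i, NormedAddCommGroup (E i)]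
  [∀ i, InnerProductSpace 𝕜 (E i)] [∀ i, CompleteSpace (E i)]

open ContinuousLinearMap InnerProduct in
lemma adjoint_evalCLM [DecidableEq α] (i : α) :
    (evalCLM 𝕜 E 2 i)† = singleContinuousLinearMap 𝕜 E 2 i := by
  refine ((eq_adjoint_iff _ _).mpr fun w f => ?_).symm
  simp [lp.inner_single_left, evalCLM]

open ContinuousLinearMap InnerProduct in
lemma adjoint_singleContinuousLinearMap [DecidableEq α] (i : α) :
    (singleContinuousLinearMap 𝕜 E 2 i)† = evalCLM 𝕜 E 2 i := by
  rw [← adjoint_evalCLM, adjoint_adjoint]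

noncomputable def diagUnitary : (∀ i, unitary (E i →L[𝕜] E i)) →* unitary (lp E 2 →L[𝕜] lp E 2) :=
  Unitary.linearIsometryEquiv.symm.toMonoidHom.comp <|
    congrRightHom.comp <| MonoidHom.piMap fun _ => Unitary.linearIsometryEquiv.toMonoidHom

@[simp]
lemma diagUnitary_apply (u : ∀ i, unitary (E i →L[𝕜] E i)) (f : lp E 2) (i : α) :
    (diagUnitary u : lp E 2 →L[𝕜] lp E 2) f i = (u i : E i →L[𝕜] E i) (f i) := rfl

lemma continuous_diagUnitary_apply {X : Type*} [TopologicalSpace X]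
    {u : X → ∀ i, unitary (E i →L[𝕜] E i)}
    (hu : ∀ i w, Continuous fun x => (u x i : E i →L[𝕜] E i) w) (f : lp E 2) :
    Continuous fun x => (diagUnitary (u x) : lp E 2 →L[𝕜] lp E 2) f :=
  continuous_congrRight_apply ENNReal.ofNat_ne_top hu f

end Hilbert

section Blocks

variable {α : Type*} [DecidableEq α] {E : α → Type*} [∀ i, NormedAddCommGroup (E i)]
  [∀ i, InnerProductSpace ℂ (E i)]

open ContinuousLinearMap

noncomputable def singleOp (i : α) (a : E i →L[ℂ] E i) : lp E 2 →L[ℂ] lp E 2 :=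
  (singleContinuousLinearMap ℂ E 2 i).comp (a.comp (evalCLM ℂ E 2 i))

noncomputable def diagBlock (x : lp E 2 →L[ℂ] lp E 2) (i : α) : E i →L[ℂ] E i :=
  (evalCLM ℂ E 2 i).comp (x.comp (singleContinuousLinearMap ℂ E 2 i))

@[simp]
lemma singleOp_apply (i : α) (a : E i →L[ℂ] E i) (f : lp E 2) :
    singleOp i a f = lp.single 2 i (a (f i)) := rfl

@[simp]
lemma diagBlock_apply (x : lp E 2 →L[ℂ] lp E 2) (i : α) (w : E i) :
    diagBlock x i w = x (lp.single 2 i w) i := rfl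

@[simp]
lemma diagBlock_one (i : α) : diagBlock (1 : lp E 2 →L[ℂ] lp E 2) i = 1 := by
  ext w
  simp

variable [∀ i, CompleteSpace (E i)]

lemma star_singleOp (i : α) (a : E i →L[ℂ] E i) : star (singleOp i a) = singleOp i (star a) := by
  simp only [singleOp, star_eq_adjoint, adjoint_comp, adjoint_evalCLM,
    adjoint_singleContinuousLinearMap, ContinuousLinearMap.comp_assoc]

lemma diagBlock_star (x : lp E 2 →L[ℂ] lp E 2) (i : α) :
    diagBlock (star x) i = star (diagBlock x i) := by
  simp only [diagBlock, star_eq_adjoint, adjoint_comp, adjoint_evalCLM,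
    adjoint_singleContinuousLinearMap, ContinuousLinearMap.comp_assoc]

end Blocks

end lp

namespace VonNeumannAlgebra

section unitarySOT

variable {H : Type*} [NormedAddCommGroup H] [InnerProductSpace ℂ H] [CompleteSpace H]

/-- The unitary group of `M` with the strong operator topology, as a subspace of `H → H` with the
product topology: the ambient space of `FiniteTypeWitness.closed`. -/
def unitarySOT (M : VonNeumannAlgebra H) : Set (H → H) :=
  {fn | ∃ u : H →L[ℂ] H, u ∈ M ∧ u ∈ unitary (H →L[ℂ] H) ∧ ⇑u = fn}

end unitarySOT

open lp

variable {α : Type*} [DecidableEq α] {E : α → Type*} [∀ i, NormedAddCommGroup (E i)]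
  [∀ i, InnerProductSpace ℂ (E i)] [∀ i, CompleteSpace (E i)]

/-- The direct sum `⨁ᵢ Nᵢ` acting on `ℓ²(Eᵢ)`, as the commutant of `⋃ᵢ Nᵢ'` acting on single
summands: its elements are the block-diagonal operators with blocks in `Nᵢ'' = Nᵢ`. -/
noncomputable def lpSum (N : ∀ i, VonNeumannAlgebra (E i)) : VonNeumannAlgebra (lp E 2) where
  toStarSubalgebra := StarSubalgebra.centralizer ℂ (⋃ i, singleOp i '' ((N i).commutant : Set _))
  centralizer_centralizer' := Set.centralizer_centralizer_centralizer _

variable {N : ∀ i, VonNeumannAlgebra (E i)} {x : lp E 2 →L[ℂ] lp E 2}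

lemma mem_lpSum_iff :
    x ∈ lpSum N ↔ ∀ i, ∀ a ∈ (N i).commutant, singleOp i a * x = x * singleOp i a := by
  change x ∈ StarSubalgebra.centralizer ℂ _ ↔ _
  simp only [StarSubalgebra.mem_centralizer_iff, Set.mem_iUnion, Set.mem_image,
    forall_exists_index, and_imp]
  refine ⟨fun h i a ha => (h _ i a ha rfl).1, ?_⟩
  rintro h _ i a ha rfl
  exact ⟨h i a ha, star_singleOp i a ▸ h i _ (star_mem ha)⟩

lemma apply_eq_diagBlock (hx : x ∈ lpSum N) (f : lp E 2) (i : α) :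
    x f i = diagBlock x i (f i) := by
  simpa [lp.single_apply_self] using congr($(mem_lpSum_iff.mp hx i 1 (one_mem _)) f i)

lemma diagBlock_mem (hx : x ∈ lpSum N) (i : α) : diagBlock x i ∈ N i := by
  rw [← (N i).commutant_commutant, mem_commutant_iff]
  intro a ha
  ext w
  have := congr($(mem_lpSum_iff.mp hx i a ha) (lp.single 2 i w) i)
  simpa [lp.single_apply_self] using this

lemma diagBlock_mul (hx : x ∈ lpSum N) (y : lp E 2 →L[ℂ] lp E 2) (i : α) :
    diagBlock (x * y) i = diagBlock x i * diagBlock y i := by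
  ext w
  exact apply_eq_diagBlock hx _ i

lemma ext_diagBlock {y : lp E 2 →L[ℂ] lp E 2} (hx : x ∈ lpSum N) (hy : y ∈ lpSum N)
    (h : ∀ i, diagBlock x i = diagBlock y i) : x = y := by
  ext f i
  rw [apply_eq_diagBlock hx, apply_eq_diagBlock hy, h]

lemma diagBlock_mem_unitary (hx : x ∈ lpSum N) (hu : x ∈ unitary (lp E 2 →L[ℂ] lp E 2)) (i : α) :
    diagBlock x i ∈ unitary (E i →L[ℂ] E i) := by
  rw [Unitary.mem_iff, ← diagBlock_star, ← diagBlock_mul (star_mem hx), ← diagBlock_mul hx,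
    Unitary.star_mul_self_of_mem hu, Unitary.mul_star_self_of_mem hu, diagBlock_one]
  exact ⟨rfl, rfl⟩

lemma lpSum_finite (hN : ∀ i, ∀ a ∈ N i, star a * a = 1 → a * star a = 1)
    (hx : x ∈ lpSum N) (hiso : star x * x = 1) : x * star x = 1 := by
  refine ext_diagBlock (mul_mem hx (star_mem hx)) (one_mem _) fun i => ?_
  have hblock : star (diagBlock x i) * diagBlock x i = 1 := by
    rw [← diagBlock_star, ← diagBlock_mul (star_mem hx), hiso, diagBlock_one]
  rw [diagBlock_mul hx, diagBlock_star, hN i _ (diagBlock_mem hx i) hblock, diagBlock_one]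

lemma diagUnitary_mem_lpSum {u : ∀ i, unitary (E i →L[ℂ] E i)}
    (hu : ∀ i, (u i : E i →L[ℂ] E i) ∈ N i) :
    (diagUnitary u : lp E 2 →L[ℂ] lp E 2) ∈ lpSum N := by
  refine mem_lpSum_iff.mpr fun i a ha => ?_
  ext f j
  rcases eq_or_ne j i with rfl | h
  · simpa [lp.single_apply_self] using congr($((mem_commutant_iff.mp ha) _ (hu j)) (f j)).symm
  · simp [Pi.single_eq_of_ne h]

noncomputable def unitarySOTDiagBlock (p : (lpSum N).unitarySOT) (i : α) : (N i).unitarySOT :=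
  ⟨fun w => p.1 (lp.single 2 i w) i, by
    obtain ⟨u, huM, huU, hu⟩ := p.2
    exact ⟨diagBlock u i, diagBlock_mem huM i, diagBlock_mem_unitary huM huU i, by
      ext; simp [← hu]⟩⟩

lemma continuous_unitarySOTDiagBlock : Continuous (unitarySOTDiagBlock (N := N)) :=
  continuous_pi fun i => .subtype_mk (continuous_pi fun _ =>
    (evalCLM ℂ E 2 i).continuous.comp ((continuous_apply _).comp continuous_subtype_val)) _

lemma injective_unitarySOTDiagBlock : Injective (unitarySOTDiagBlock (N := N)) := by
  rintro ⟨_, u, huM, _, rfl⟩ ⟨_, v, hvM, _, rfl⟩ h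
  refine Subtype.ext <| congrArg DFunLike.coe <| ext_diagBlock huM hvM fun i => ?_
  ext w
  exact congrFun (congrArg Subtype.val (congrFun h i)) w

end VonNeumannAlgebra

namespace FiniteTypeWitness

attribute [instance] nacg ips cs

variable {G : Type*} [TopologicalSpace G] [Group G]

def toUnitarySOT (W : FiniteTypeWitness G) (g : G) : W.M.unitarySOT :=
  ⟨W.π g, W.π g, W.mem g, W.unitary g, rfl⟩

lemma isClosedEmbedding_toUnitarySOT (W : FiniteTypeWitness G) :
    IsClosedEmbedding W.toUnitarySOT where
  toIsEmbedding := IsEmbedding.subtypeVal.of_comp_iff.mp W.hembedding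
  isClosed_range := by
    simp only [Set.range, Subtype.ext_iff]
    exact W.closed

noncomputable def unitaryHom (W : FiniteTypeWitness G) : G →* _root_.unitary (W.H →L[ℂ] W.H) :=
  W.π.codRestrict _ W.unitary

noncomputable def ofIsClosedEmbedding {H : Type} [NormedAddCommGroup H] [InnerProductSpace ℂ H]
    [CompleteSpace H] (M : VonNeumannAlgebra H)
    (hM : ∀ x : H →L[ℂ] H, x ∈ M → star x * x = 1 → x * star x = 1)
    (ρ : G →* _root_.unitary (H →L[ℂ] H)) (hρ : ∀ g, (ρ g : H →L[ℂ] H) ∈ M)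
    (h : IsClosedEmbedding fun g => (⟨ρ g, ρ g, hρ g, (ρ g).2, rfl⟩ : M.unitarySOT)) :
    FiniteTypeWitness G where
  H := H
  M := M
  finite := hM
  π := (_root_.unitary (H →L[ℂ] H)).subtype.comp ρ
  mem := hρ
  unitary g := (ρ g).2
  hembedding := IsEmbedding.subtypeVal.comp h.isEmbedding
  closed := by
    have := h.isClosed_range
    simp only [Set.range, Subtype.ext_iff] at this
    exact this

end FiniteTypeWitness

namespace IsFiniteTypeGroup

open VonNeumannAlgebra lp

theorem pi {ι : Type} {G : ι → Type*} [∀ i, TopologicalSpace (G i)] [∀ i, Group (G i)]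
    (h : ∀ i, IsFiniteTypeGroup (G i)) : IsFiniteTypeGroup (∀ i, G i) := by
  classical
  let W i := (h i).some
  let M : VonNeumannAlgebra (lp (fun i => (W i).H) 2) := lpSum fun i => (W i).M
  let ρ : (∀ i, G i) →* unitary (lp (fun i => (W i).H) 2 →L[ℂ] lp (fun i => (W i).H) 2) :=
    diagUnitary.comp (MonoidHom.piMap fun i => (W i).unitaryHom)
  have hρ_mem (g : ∀ i, G i) : (ρ g : lp (fun i => (W i).H) 2 →L[ℂ] _) ∈ M :=
    diagUnitary_mem_lpSum fun i => (W i).mem (g i)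
  let Φ (g : ∀ i, G i) : M.unitarySOT := ⟨ρ g, ρ g, hρ_mem g, (ρ g).2, rfl⟩
  have hΦ_cont : Continuous Φ :=
    .subtype_mk (continuous_pi <| continuous_diagUnitary_apply fun i w =>
      (continuous_apply w).comp <| (W i).hembedding.continuous.comp (continuous_apply i)) _
  have hΦ_blocks : unitarySOTDiagBlock ∘ Φ = Pi.map fun i => (W i).toUnitarySOT := by
    ext g i w
    simp [unitarySOTDiagBlock, FiniteTypeWitness.toUnitarySOT, Φ, ρ, FiniteTypeWitness.unitaryHom]
  have hΦ : IsClosedEmbedding Φ :=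
    .of_comp_of_injective hΦ_cont continuous_unitarySOTDiagBlock injective_unitarySOTDiagBlock <|
      hΦ_blocks ▸ .piMap fun i => (W i).isClosedEmbedding_toUnitarySOT
  exact ⟨.ofIsClosedEmbedding M (fun _ => lpSum_finite fun i => (W i).finite) ρ hρ_mem hΦ⟩

theorem t2Space {G : Type*} [TopologicalSpace G] [Group G] (h : IsFiniteTypeGroup G) :
    T2Space G :=
  h.some.hembedding.t2Space

theorem subgroup {G : Type*} [TopologicalSpace G] [Group G] (h : IsFiniteTypeGroup G)
    {K : Subgroup G} (hK : IsClosed (K : Set G)) : IsFiniteTypeGroup K :=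
  let W := h.some
  ⟨.ofIsClosedEmbedding W.M W.finite (W.unitaryHom.comp K.subtype) (fun g => W.mem g)
    (W.isClosedEmbedding_toUnitarySOT.comp hK.isClosedEmbedding_subtypeVal)⟩

end IsFiniteTypeGroup

section ProjectiveLimit

variable {ι : Type*} [Preorder ι] {G : ι → Type*} [∀ i, Group (G i)]

def projectiveLimit (j : ∀ ⦃i k : ι⦄, i ≤ k → (G k →* G i)) : Subgroup (∀ i, G i) where
  carrier := {x | ∀ (i k : ι) (h : i ≤ k), j h (x k) = x i}
  one_mem' _ _ _ := map_one _
  mul_mem' hx hy i k h := by simp only [Pi.mul_apply, map_mul, hx i k h, hy i k h]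
  inv_mem' hx i k h := by simp only [Pi.inv_apply, map_inv, hx i k h]

lemma isClosed_projectiveLimit [∀ i, TopologicalSpace (G i)] [∀ i, T2Space (G i)]
    {j : ∀ ⦃i k : ι⦄, i ≤ k → (G k →* G i)} (hj : ∀ (i k : ι) (h : i ≤ k), Continuous (j h)) :
    IsClosed (projectiveLimit j : Set (∀ i, G i)) := by
  simp only [projectiveLimit, Subgroup.coe_set_mk, Set.ofPred_forall]
  exact isClosed_iInter fun i => isClosed_iInter fun k => isClosed_iInter fun h =>
    isClosed_eq ((hj i k h).comp (continuous_apply k)) (continuous_apply i)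

end ProjectiveLimit

theorem stmt_18_general (G : ℕ → Type*) [∀ n, TopologicalSpace (G n)] [∀ n, Group (G n)]
    (hfin : ∀ n, IsFiniteTypeGroup (G n))
    (j : ∀ ⦃n m : ℕ⦄, n ≤ m → (G m →* G n))
    (hcont : ∀ (n m : ℕ) (h : n ≤ m), Continuous (j h)) :
    ∃ Γ : Subgroup (∀ n, G n),
      (Γ : Set (∀ n, G n)) = {x | ∀ (n m : ℕ) (h : n ≤ m), j h (x m) = x n} ∧
      IsFiniteTypeGroup Γ := by
  have := fun n => (hfin n).t2Space
  exact ⟨projectiveLimit j, rfl,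
    (IsFiniteTypeGroup.pi hfin).subgroup (isClosed_projectiveLimit hcont)⟩

/-- The projective limit of a projective system of Polish groups of finite type (with
continuous connecting homomorphisms) — realized as the closed subgroup
`{x ∈ ∏ₙ Gₙ : jₘₙ(xₘ) = xₙ for n ≤ m}` of the direct product — is of finite type. -/
theorem stmt_18 (G : ℕ → Type*) [∀ n, TopologicalSpace (G n)] [∀ n, Group (G n)]
    [∀ n, IsTopologicalGroup (G n)] [∀ n, PolishSpace (G n)]
    (hfin : ∀ n, IsFiniteTypeGroup (G n))
    (j : ∀ ⦃n m : ℕ⦄, n ≤ m → (G m →* G n))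
    (hcont : ∀ (n m : ℕ) (h : n ≤ m), Continuous (j h))
    (hrefl : ∀ n : ℕ, j (le_refl n) = MonoidHom.id (G n))
    (htrans : ∀ (n m k : ℕ) (hnm : n ≤ m) (hmk : m ≤ k),
      (j hnm).comp (j hmk) = j (hnm.trans hmk)) :
    ∃ Γ : Subgroup (∀ n, G n),
      (Γ : Set (∀ n, G n)) = {x | ∀ (n m : ℕ) (h : n ≤ m), j h (x m) = x n} ∧
      IsFiniteTypeGroup Γ :=
  stmt_18_general G hfin j hcont
end
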